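/- Lower bound for the inner-iteration rotational gradient (equation (B.6)): Let H be an n×n real symmetric matrix with σ_max(H) ≤ M, U an n×N real matrix with σ_max(U) ≤ α, and s > 0 with 4·s·α²·M < 2. Define Ũ⁽⁰⁾ = U and, for k ≥ 1, Ũ⁽ᵏ⁾ = (Iₙ + (s/2)·𝒜_{Ũ⁽ᵏ⁻¹⁾})⁻¹·U. Then for every p ≥ 0, ‖𝒜_{Ũ⁽ᵖ⁾}·Ũ⁽ᵖ⁾‖_F ≥ ((2 − 10·s·α²·M)/(2 − 4·s·α²·M))·‖𝒜_U·U‖_F. -/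

import Mathlib

/-! Since `𝒜_W` is skew-symmetric, `‖(I + S)x‖² = ‖x‖² + ‖Sx‖²` for `S = (s/2)𝒜_W`, so
`(I + S)⁻¹` is a contraction: every iterate keeps `σ_max ≤ α`, and `Ũ⁽ᵏ⁺¹⁾ − U = −(I + S)⁻¹ S U`.
Writing `𝒜_W = [H, W Wᵀ]` shows that `W ↦ 𝒜_W` is `4Mα`-Lipschitz for the Frobenius norm on the
ball `σ_max ≤ α`. Hence `d_k = ‖Ũ⁽ᵏ⁾ − U‖_F` satisfies `d_{k+1} ≤ (s/2) g + 2sα²M d_k` with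
`g = ‖𝒜_U U‖_F`, so every `d_k` stays below the fixed point `(s/2) g / (1 − 2sα²M)`. Since
`W ↦ 𝒜_W W` is `6Mα²`-Lipschitz on the same ball, `‖𝒜_{Ũ⁽ᵖ⁾} Ũ⁽ᵖ⁾‖_F` is at least
`g − 6Mα² (s/2) g / (1 − 2sα²M)`, which is the claimed bound. -/

open Matrix

noncomputable section

/-- The skew-symmetric commutator 𝒜_W = H·W·Wᵀ − W·Wᵀ·H. -/
def commA {n N : ℕ} (H : Matrix (Fin n) (Fin n) ℝ) (W : Matrix (Fin n) (Fin N) ℝ) :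
    Matrix (Fin n) (Fin n) ℝ :=
  H * W * Wᵀ - W * Wᵀ * H

/-- Frobenius norm of a real matrix. -/
def frobNorm {m k : ℕ} (A : Matrix (Fin m) (Fin k) ℝ) : ℝ :=
  Real.sqrt (∑ i, ∑ j, (A i j) ^ 2)

/-- Largest singular value (ℓ²-operator norm) of a real matrix. -/
def sigmaMax {m k : ℕ} (A : Matrix (Fin m) (Fin k) ℝ) : ℝ :=
  ‖LinearMap.toContinuousLinearMap (Matrix.toEuclideanLin A)‖

section FrobeniusNorm

attribute [local instance] Matrix.frobeniusNormedAddCommGroup Matrix.frobeniusNormedSpace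

variable {m k : ℕ}

lemma frobNorm_eq_norm (A : Matrix (Fin m) (Fin k) ℝ) : frobNorm A = ‖A‖ := by
  simp only [frobNorm, Matrix.frobenius_norm_def, Real.norm_eq_abs, Real.sqrt_eq_rpow]
  norm_cast
  simp only [sq_abs]

lemma frobNorm_nonneg (A : Matrix (Fin m) (Fin k) ℝ) : 0 ≤ frobNorm A :=
  Real.sqrt_nonneg _

lemma frobNorm_zero : frobNorm (0 : Matrix (Fin m) (Fin k) ℝ) = 0 := by
  simp [frobNorm_eq_norm]

lemma frobNorm_add_le (A B : Matrix (Fin m) (Fin k) ℝ) :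
    frobNorm (A + B) ≤ frobNorm A + frobNorm B := by
  simpa only [frobNorm_eq_norm] using norm_add_le A B

lemma frobNorm_sub_le (A B : Matrix (Fin m) (Fin k) ℝ) :
    frobNorm (A - B) ≤ frobNorm A + frobNorm B := by
  simpa only [frobNorm_eq_norm] using norm_sub_le A B

lemma frobNorm_sub_frobNorm_le (A B : Matrix (Fin m) (Fin k) ℝ) :
    frobNorm A - frobNorm B ≤ frobNorm (A - B) := by
  simpa only [frobNorm_eq_norm] using norm_sub_norm_le A B

lemma frobNorm_sub_comm (A B : Matrix (Fin m) (Fin k) ℝ) :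
    frobNorm (A - B) = frobNorm (B - A) := by
  simpa only [frobNorm_eq_norm] using norm_sub_rev A B

lemma frobNorm_neg (A : Matrix (Fin m) (Fin k) ℝ) : frobNorm (-A) = frobNorm A := by
  simpa only [frobNorm_eq_norm] using norm_neg A

lemma frobNorm_smul (c : ℝ) (A : Matrix (Fin m) (Fin k) ℝ) :
    frobNorm (c • A) = |c| * frobNorm A := by
  simp only [frobNorm_eq_norm, norm_smul, Real.norm_eq_abs]

lemma frobNorm_transpose (A : Matrix (Fin m) (Fin k) ℝ) : frobNorm Aᵀ = frobNorm A := by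
  simpa only [frobNorm_eq_norm] using Matrix.frobenius_norm_transpose A

end FrobeniusNorm

section SigmaMax

open scoped Matrix.Norms.L2Operator

variable {m k l : ℕ}

lemma sigmaMax_eq_norm (A : Matrix (Fin m) (Fin k) ℝ) : sigmaMax A = ‖A‖ := rfl

lemma sigmaMax_nonneg (A : Matrix (Fin m) (Fin k) ℝ) : 0 ≤ sigmaMax A := norm_nonneg A

lemma sigmaMax_mul_le (A : Matrix (Fin m) (Fin k) ℝ) (B : Matrix (Fin k) (Fin l) ℝ) :
    sigmaMax (A * B) ≤ sigmaMax A * sigmaMax B :=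
  Matrix.l2_opNorm_mul A B

lemma sigmaMax_sub_le (A B : Matrix (Fin m) (Fin k) ℝ) :
    sigmaMax (A - B) ≤ sigmaMax A + sigmaMax B :=
  norm_sub_le A B

lemma sigmaMax_transpose (A : Matrix (Fin m) (Fin k) ℝ) : sigmaMax Aᵀ = sigmaMax A := by
  simpa only [sigmaMax_eq_norm, Matrix.conjTranspose_eq_transpose_of_trivial] using
    Matrix.l2_opNorm_conjTranspose A

lemma sum_sq_mul_apply_le (A : Matrix (Fin m) (Fin k) ℝ) (B : Matrix (Fin k) (Fin l) ℝ)
    (j : Fin l) : ∑ i, (A * B) i j ^ 2 ≤ sigmaMax A ^ 2 * ∑ i, B i j ^ 2 := by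
  have h := Matrix.l2_opNorm_mulVec A (WithLp.toLp 2 fun i => B i j)
  have h2 := pow_le_pow_left₀ (norm_nonneg _) h 2
  simpa [sigmaMax_eq_norm, mul_pow, EuclideanSpace.real_norm_sq_eq, Matrix.mulVec, Matrix.mul_apply,
    dotProduct] using h2

lemma frobNorm_mul_le_sigmaMax_mul (A : Matrix (Fin m) (Fin k) ℝ)
    (B : Matrix (Fin k) (Fin l) ℝ) : frobNorm (A * B) ≤ sigmaMax A * frobNorm B := by
  rw [frobNorm, frobNorm, Finset.sum_comm, Finset.sum_comm (f := fun i j => B i j ^ 2),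
    ← Real.sqrt_sq (sigmaMax_nonneg A), ← Real.sqrt_mul (sq_nonneg _), Finset.mul_sum]
  exact Real.sqrt_le_sqrt (Finset.sum_le_sum fun j _ => sum_sq_mul_apply_le A B j)

lemma frobNorm_mul_le_mul_sigmaMax (A : Matrix (Fin m) (Fin k) ℝ)
    (B : Matrix (Fin k) (Fin l) ℝ) : frobNorm (A * B) ≤ frobNorm A * sigmaMax B := by
  rw [← frobNorm_transpose, Matrix.transpose_mul, mul_comm, ← sigmaMax_transpose,
    ← frobNorm_transpose A]
  exact frobNorm_mul_le_sigmaMax_mul _ _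

end SigmaMax

section SkewSymmetric

variable {ι : Type*} [Fintype ι] {S : Matrix ι ι ℝ}

lemma norm_toLp_sq (x : ι → ℝ) : ‖WithLp.toLp 2 x‖ ^ 2 = x ⬝ᵥ x := by
  rw [EuclideanSpace.real_norm_sq_eq]
  simp [dotProduct, sq]

lemma dotProduct_mulVec_self_eq_zero (hS : Sᵀ = -S) (x : ι → ℝ) : x ⬝ᵥ S *ᵥ x = 0 := by
  have h : x ⬝ᵥ S *ᵥ x = -(x ⬝ᵥ S *ᵥ x) := by
    conv_lhs => rw [Matrix.dotProduct_mulVec, ← Matrix.mulVec_transpose, hS, dotProduct_comm,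
      Matrix.neg_mulVec, dotProduct_neg]
  linarith

lemma norm_toLp_le_norm_toLp_one_add_mulVec [DecidableEq ι] (hS : Sᵀ = -S) (x : ι → ℝ) :
    ‖WithLp.toLp 2 x‖ ≤ ‖WithLp.toLp 2 ((1 + S) *ᵥ x)‖ := by
  refine (pow_le_pow_iff_left₀ (norm_nonneg _) (norm_nonneg _) two_ne_zero).mp ?_
  have h : (1 + S) *ᵥ x ⬝ᵥ (1 + S) *ᵥ x =
      x ⬝ᵥ x + 2 * (x ⬝ᵥ S *ᵥ x) + S *ᵥ x ⬝ᵥ S *ᵥ x := by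
    simp only [Matrix.add_mulVec, Matrix.one_mulVec, add_dotProduct, dotProduct_add,
      dotProduct_comm (S *ᵥ x) x]
    ring
  rw [norm_toLp_sq, norm_toLp_sq, h, dotProduct_mulVec_self_eq_zero hS, ← norm_toLp_sq (S *ᵥ x)]
  nlinarith [sq_nonneg ‖WithLp.toLp 2 (S *ᵥ x)‖]

lemma isUnit_one_add_of_transpose_eq_neg [DecidableEq ι] (hS : Sᵀ = -S) : IsUnit (1 + S) := by
  refine Matrix.mulVec_injective_iff_isUnit.mp fun x y hxy => sub_eq_zero.mp ?_
  have h := norm_toLp_le_norm_toLp_one_add_mulVec hS (x - y)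
  rw [Matrix.mulVec_sub, hxy, sub_self, WithLp.toLp_zero, norm_zero, norm_le_zero_iff] at h
  simpa using congrArg WithLp.ofLp h

end SkewSymmetric

lemma sigmaMax_inv_one_add_le_one {n : ℕ} {S : Matrix (Fin n) (Fin n) ℝ} (hS : Sᵀ = -S) :
    sigmaMax (1 + S)⁻¹ ≤ 1 := by
  refine ContinuousLinearMap.opNorm_le_bound _ zero_le_one fun y => ?_
  have hy : (1 + S) *ᵥ ((1 + S)⁻¹ *ᵥ y.ofLp) = y.ofLp := by
    rw [Matrix.mulVec_mulVec, Matrix.mul_nonsing_inv _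
      ((Matrix.isUnit_iff_isUnit_det _).mp (isUnit_one_add_of_transpose_eq_neg hS)),
      Matrix.one_mulVec]
  have h := norm_toLp_le_norm_toLp_one_add_mulVec hS ((1 + S)⁻¹ *ᵥ y.ofLp)
  rw [hy, WithLp.toLp_ofLp] at h
  rw [one_mul]
  exact h

section Commutator

variable {n N : ℕ} {H : Matrix (Fin n) (Fin n) ℝ}

lemma commA_eq_lie (H : Matrix (Fin n) (Fin n) ℝ) (W : Matrix (Fin n) (Fin N) ℝ) :
    commA H W = ⁅H, W * Wᵀ⁆ := by
  rw [commA, Ring.lie_def, Matrix.mul_assoc]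

lemma commA_transpose (hH : H.IsSymm) (W : Matrix (Fin n) (Fin N) ℝ) :
    (commA H W)ᵀ = -commA H W := by
  simp only [commA_eq_lie, Ring.lie_def, Matrix.transpose_sub, Matrix.transpose_mul,
    Matrix.transpose_transpose, hH.eq, neg_sub]

lemma smul_commA_transpose (hH : H.IsSymm) (c : ℝ) (W : Matrix (Fin n) (Fin N) ℝ) :
    (c • commA H W)ᵀ = -(c • commA H W) := by
  rw [Matrix.transpose_smul, commA_transpose hH, smul_neg]

lemma frobNorm_lie_le (H G : Matrix (Fin n) (Fin n) ℝ) :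
    frobNorm ⁅H, G⁆ ≤ 2 * sigmaMax H * frobNorm G := by
  rw [Ring.lie_def]
  linarith [frobNorm_sub_le (H * G) (G * H), frobNorm_mul_le_sigmaMax_mul H G,
    frobNorm_mul_le_mul_sigmaMax G H]

lemma sigmaMax_lie_le (H G : Matrix (Fin n) (Fin n) ℝ) :
    sigmaMax ⁅H, G⁆ ≤ 2 * sigmaMax H * sigmaMax G := by
  rw [Ring.lie_def]
  linarith [sigmaMax_sub_le (H * G) (G * H), sigmaMax_mul_le H G, sigmaMax_mul_le G H]

lemma frobNorm_mul_transpose_sub_le (W U : Matrix (Fin n) (Fin N) ℝ) :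
    frobNorm (W * Wᵀ - U * Uᵀ) ≤ (sigmaMax W + sigmaMax U) * frobNorm (W - U) := by
  have h : W * Wᵀ - U * Uᵀ = W * (W - U)ᵀ + (W - U) * Uᵀ := by
    simp only [Matrix.transpose_sub, Matrix.mul_sub, Matrix.sub_mul]
    abel
  rw [h]
  have hW := frobNorm_mul_le_sigmaMax_mul W (W - U)ᵀ
  have hU := frobNorm_mul_le_mul_sigmaMax (W - U) Uᵀ
  rw [frobNorm_transpose] at hW
  rw [sigmaMax_transpose] at hU
  linarith [frobNorm_add_le (W * (W - U)ᵀ) ((W - U) * Uᵀ)]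

variable {M α : ℝ}

lemma sigmaMax_commA_le (hH : sigmaMax H ≤ M) {W : Matrix (Fin n) (Fin N) ℝ}
    (hW : sigmaMax W ≤ α) : sigmaMax (commA H W) ≤ 2 * M * α ^ 2 := by
  have hWWt : sigmaMax (W * Wᵀ) ≤ α ^ 2 := by
    have := sigmaMax_mul_le W Wᵀ
    rw [sigmaMax_transpose] at this
    nlinarith [sigmaMax_nonneg W]
  rw [commA_eq_lie]
  calc sigmaMax ⁅H, W * Wᵀ⁆ ≤ 2 * sigmaMax H * sigmaMax (W * Wᵀ) := sigmaMax_lie_le _ _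
    _ ≤ 2 * M * α ^ 2 :=
        mul_le_mul (by linarith) hWWt (sigmaMax_nonneg _) (by linarith [sigmaMax_nonneg H])

lemma frobNorm_commA_sub_le (hH : sigmaMax H ≤ M) {W U : Matrix (Fin n) (Fin N) ℝ}
    (hW : sigmaMax W ≤ α) (hU : sigmaMax U ≤ α) :
    frobNorm (commA H W - commA H U) ≤ 4 * M * α * frobNorm (W - U) := by
  have hlie : commA H W - commA H U = ⁅H, W * Wᵀ - U * Uᵀ⁆ := by
    simp only [commA_eq_lie, Ring.lie_def, Matrix.mul_sub, Matrix.sub_mul]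
    abel
  rw [hlie]
  calc frobNorm ⁅H, W * Wᵀ - U * Uᵀ⁆ ≤ 2 * sigmaMax H * frobNorm (W * Wᵀ - U * Uᵀ) :=
        frobNorm_lie_le _ _
    _ ≤ 2 * M * ((α + α) * frobNorm (W - U)) := by
        refine mul_le_mul (by linarith) ((frobNorm_mul_transpose_sub_le W U).trans ?_)
          (frobNorm_nonneg _) (by linarith [sigmaMax_nonneg H])
        exact mul_le_mul_of_nonneg_right (add_le_add hW hU) (frobNorm_nonneg _)
    _ = 4 * M * α * frobNorm (W - U) := by ring

end Commutator

section Perturbation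

variable {n N K : ℕ} {H : Matrix (Fin n) (Fin n) ℝ} {M α : ℝ}

lemma frobNorm_commA_sub_mul_le (hH : sigmaMax H ≤ M) {W U : Matrix (Fin n) (Fin N) ℝ}
    (hW : sigmaMax W ≤ α) (hU : sigmaMax U ≤ α) {X : Matrix (Fin n) (Fin K) ℝ}
    (hX : sigmaMax X ≤ α) :
    frobNorm ((commA H W - commA H U) * X) ≤ 4 * M * α ^ 2 * frobNorm (W - U) := by
  have hM : 0 ≤ M := (sigmaMax_nonneg H).trans hH
  have hα : 0 ≤ α := (sigmaMax_nonneg U).trans hU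
  calc frobNorm ((commA H W - commA H U) * X)
      ≤ frobNorm (commA H W - commA H U) * sigmaMax X := frobNorm_mul_le_mul_sigmaMax _ _
    _ ≤ 4 * M * α * frobNorm (W - U) * α :=
        mul_le_mul (frobNorm_commA_sub_le hH hW hU) hX (sigmaMax_nonneg _)
          (by have := frobNorm_nonneg (W - U); positivity)
    _ = 4 * M * α ^ 2 * frobNorm (W - U) := by ring

lemma frobNorm_commA_mul_le (hH : sigmaMax H ≤ M) {W U : Matrix (Fin n) (Fin N) ℝ}
    (hW : sigmaMax W ≤ α) (hU : sigmaMax U ≤ α) :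
    frobNorm (commA H W * U) ≤ frobNorm (commA H U * U) + 4 * M * α ^ 2 * frobNorm (W - U) := by
  have h := frobNorm_add_le (commA H U * U) (commA H W * U - commA H U * U)
  have hd := frobNorm_commA_sub_mul_le hH hW hU hU
  rw [add_sub_cancel] at h
  rw [Matrix.sub_mul] at hd
  linarith

lemma frobNorm_commA_mul_self_sub_le (hH : sigmaMax H ≤ M) {W U : Matrix (Fin n) (Fin N) ℝ}
    (hW : sigmaMax W ≤ α) (hU : sigmaMax U ≤ α) :
    frobNorm (commA H W * W - commA H U * U) ≤ 6 * M * α ^ 2 * frobNorm (W - U) := by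
  have hsplit : commA H W * W - commA H U * U =
      (commA H W - commA H U) * W + commA H U * (W - U) := by
    simp only [Matrix.sub_mul, Matrix.mul_sub]
    abel
  have hU' : frobNorm (commA H U * (W - U)) ≤ 2 * M * α ^ 2 * frobNorm (W - U) :=
    (frobNorm_mul_le_sigmaMax_mul _ _).trans
      (mul_le_mul_of_nonneg_right (sigmaMax_commA_le hH hU) (frobNorm_nonneg _))
  rw [hsplit]
  linarith [frobNorm_add_le ((commA H W - commA H U) * W) (commA H U * (W - U)),
    frobNorm_commA_sub_mul_le hH hW hU hW]

end Perturbation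

section InnerIteration

variable {n N : ℕ} {S : Matrix (Fin n) (Fin n) ℝ}

lemma sigmaMax_inv_one_add_mul_le (hS : Sᵀ = -S) (U : Matrix (Fin n) (Fin N) ℝ) :
    sigmaMax ((1 + S)⁻¹ * U) ≤ sigmaMax U :=
  (sigmaMax_mul_le _ _).trans
    (mul_le_of_le_one_left (sigmaMax_nonneg U) (sigmaMax_inv_one_add_le_one hS))

lemma frobNorm_inv_one_add_mul_sub_le (hS : Sᵀ = -S) (U : Matrix (Fin n) (Fin N) ℝ) :
    frobNorm ((1 + S)⁻¹ * U - U) ≤ frobNorm (S * U) := by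
  have hinv : (1 + S)⁻¹ * (1 + S) = 1 :=
    Matrix.nonsing_inv_mul _ ((Matrix.isUnit_iff_isUnit_det _).mp
      (isUnit_one_add_of_transpose_eq_neg hS))
  have h : (1 + S)⁻¹ * U - U = -((1 + S)⁻¹ * (S * U)) := by
    calc (1 + S)⁻¹ * U - U = (1 + S)⁻¹ * U - (1 + S)⁻¹ * (1 + S) * U := by
          rw [hinv, Matrix.one_mul]
      _ = -((1 + S)⁻¹ * (S * U)) := by
          simp only [Matrix.mul_add, Matrix.mul_one, Matrix.add_mul, Matrix.mul_assoc]
          abel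
  rw [h, frobNorm_neg]
  exact (frobNorm_mul_le_sigmaMax_mul _ _).trans
    (mul_le_of_le_one_left (frobNorm_nonneg _) (sigmaMax_inv_one_add_le_one hS))

end InnerIteration

lemma le_div_one_sub_of_le_add_mul {d : ℕ → ℝ} {a b : ℝ} (hb₀ : 0 ≤ b) (hb₁ : b < 1)
    (h₀ : d 0 ≤ a / (1 - b)) (hstep : ∀ k, d (k + 1) ≤ a + b * d k) (k : ℕ) :
    d k ≤ a / (1 - b) := by
  induction k with
  | zero => exact h₀
  | succ k ih =>
    calc d (k + 1) ≤ a + b * d k := hstep k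
      _ ≤ a + b * (a / (1 - b)) := by gcongr
      _ = a / (1 - b) := by field_simp [(sub_pos.mpr hb₁).ne']; ring

lemma frobNorm_inner_step_sub_le {n N : ℕ} {H : Matrix (Fin n) (Fin n) ℝ} (hH : H.IsSymm)
    {M α s : ℝ} (hM : sigmaMax H ≤ M) {W U : Matrix (Fin n) (Fin N) ℝ}
    (hW : sigmaMax W ≤ α) (hU : sigmaMax U ≤ α) (hs : 0 ≤ s) :
    frobNorm ((1 + (s / 2) • commA H W)⁻¹ * U - U)
      ≤ s / 2 * frobNorm (commA H U * U) + 2 * s * α ^ 2 * M * frobNorm (W - U) := by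
  calc frobNorm ((1 + (s / 2) • commA H W)⁻¹ * U - U)
      ≤ frobNorm ((s / 2) • commA H W * U) :=
        frobNorm_inv_one_add_mul_sub_le (smul_commA_transpose hH _ W) U
    _ = s / 2 * frobNorm (commA H W * U) := by
        rw [Matrix.smul_mul, frobNorm_smul, abs_of_nonneg (by positivity)]
    _ ≤ s / 2 * (frobNorm (commA H U * U) + 4 * M * α ^ 2 * frobNorm (W - U)) := by
        gcongr
        exact frobNorm_commA_mul_le hM hW hU
    _ = s / 2 * frobNorm (commA H U * U) + 2 * s * α ^ 2 * M * frobNorm (W - U) := by ring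

/-- Lower bound for the inner-iteration rotational gradient (equation (B.6)). -/
theorem inner_iteration_gradient_lower_bound
    {n N : ℕ} (H : Matrix (Fin n) (Fin n) ℝ) (hH : H.IsSymm)
    (M α : ℝ) (hM : sigmaMax H ≤ M)
    (U : Matrix (Fin n) (Fin N) ℝ) (hU : sigmaMax U ≤ α)
    (s : ℝ) (hs : 0 < s) (hsmall : 4 * s * α ^ 2 * M < 2)
    (Ut : ℕ → Matrix (Fin n) (Fin N) ℝ)
    (h0 : Ut 0 = U)
    (hrec : ∀ k, Ut (k + 1) = (1 + (s / 2) • commA H (Ut k))⁻¹ * U) :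
    ∀ p : ℕ,
      frobNorm (commA H (Ut p) * Ut p)
        ≥ (2 - 10 * s * α ^ 2 * M) / (2 - 4 * s * α ^ 2 * M) * frobNorm (commA H U * U) := by
  have hM₀ : 0 ≤ M := (sigmaMax_nonneg H).trans hM
  set g := frobNorm (commA H U * U)
  have hUt : ∀ k, sigmaMax (Ut k) ≤ α := by
    rintro (_ | k)
    · rwa [h0]
    · rw [hrec]
      exact (sigmaMax_inv_one_add_mul_le (smul_commA_transpose hH _ _) U).trans hU
  have hdist (k : ℕ) : frobNorm (Ut k - U) ≤ s / 2 * g / (1 - 2 * s * α ^ 2 * M) := by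
    refine le_div_one_sub_of_le_add_mul (d := fun k => frobNorm (Ut k - U)) (by positivity)
      (by linarith) ?_ (fun k => ?_) k
    · simp only [h0, sub_self, frobNorm_zero]
      exact div_nonneg (mul_nonneg (by positivity) (frobNorm_nonneg _)) (by linarith)
    · simpa only [hrec] using frobNorm_inner_step_sub_le hH hM (hUt k) hU hs.le
  intro p
  calc (2 - 10 * s * α ^ 2 * M) / (2 - 4 * s * α ^ 2 * M) * g
      = g - 6 * M * α ^ 2 * (s / 2 * g / (1 - 2 * s * α ^ 2 * M)) := by
        have h₁ : 2 - 4 * s * α ^ 2 * M ≠ 0 := by linarith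
        have h₂ : 1 - 2 * s * α ^ 2 * M ≠ 0 := by linarith
        rw [div_mul_eq_mul_div, div_eq_iff h₁]
        field_simp
        ring
    _ ≤ g - 6 * M * α ^ 2 * frobNorm (Ut p - U) := by gcongr; exact hdist p
    _ ≤ g - frobNorm (commA H (Ut p) * Ut p - commA H U * U) := by
        linarith [frobNorm_commA_mul_self_sub_le hM (hUt p) hU]
    _ ≤ frobNorm (commA H (Ut p) * Ut p) := by
        linarith [frobNorm_sub_frobNorm_le (commA H U * U) (commA H (Ut p) * Ut p),
          frobNorm_sub_comm (commA H U * U) (commA H (Ut p) * Ut p)]
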